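/- arXiv:1903.07804 — 3 statements merged into one kernel-verified Lean document; each statement's English description precedes it below -/
import Mathlib

section
/- Let a be a non-integer real number and N a positive integer with N > |a|. Then for any two distinct integers k, m both outside the set {-N, ..., N}, one has |(k² - ak) - (m² - am)| ≥ N · d(a, ℤ), where d(a, ℤ) is the distance from a to the nearest integer. -/
theorem stmt_2 (a : ℝ) (ha : ∀ n : ℤ, a ≠ n) (N : ℕ) (hN0 : 0 < N) (hN : (N : ℝ) > |a|)
    (k m : ℤ) (hk : |k| > N) (hm : |m| > N) (hkm : k ≠ m) :
    |((k : ℝ)^2 - a * k) - ((m : ℝ)^2 - a * m)| ≥ N * min (a - ⌊a⌋) (⌊a⌋ + 1 - a) := by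
  set d := min (a - ⌊a⌋) ((⌊a⌋ : ℝ) + 1 - a) with hd
  have hfloor := Int.floor_le a
  have hceil := Int.lt_floor_add_one a
  have hd0 : 0 ≤ d := le_min (by linarith) (by linarith)
  have hd1 : d ≤ 1 := le_trans (min_le_left _ _) (by linarith)
  have hdist : ∀ n : ℤ, d ≤ |(n : ℝ) - a| := by
    intro n
    rcases le_or_gt (n : ℝ) a with h | h
    · have hn : n ≤ ⌊a⌋ := Int.le_floor.mpr h
      have hn' : (n : ℝ) ≤ (⌊a⌋ : ℝ) := by exact_mod_cast hn
      calc d ≤ a - ⌊a⌋ := min_le_left _ _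
        _ ≤ a - n := by linarith
        _ ≤ |(n : ℝ) - a| := by rw [abs_sub_comm]; exact le_abs_self _
    · have hn : ⌊a⌋ + 1 ≤ n := by
        have : (⌊a⌋ : ℝ) < n := lt_of_le_of_lt hfloor h
        have : ⌊a⌋ < n := by exact_mod_cast this
        omega
      have hn' : (⌊a⌋ : ℝ) + 1 ≤ (n : ℝ) := by exact_mod_cast hn
      calc d ≤ (⌊a⌋ : ℝ) + 1 - a := min_le_right _ _
        _ ≤ (n : ℝ) - a := by linarith
        _ ≤ |(n : ℝ) - a| := le_abs_self _
  have key : ((k : ℝ)^2 - a * k) - ((m : ℝ)^2 - a * m)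
      = ((k : ℝ) - m) * (((k : ℝ) + m) - a) := by ring
  rw [key, abs_mul]
  have h1 : (1 : ℝ) ≤ |(k : ℝ) - m| := by
    have h1' : (1 : ℤ) ≤ |k - m| := Int.one_le_abs (sub_ne_zero.mpr hkm)
    have : ((1 : ℤ) : ℝ) ≤ |((k - m : ℤ) : ℝ)| := by
      rw [← Int.cast_abs]; exact_mod_cast h1'
    push_cast at this; linarith
  have hdkm : d ≤ |(k : ℝ) + m - a| := by
    have := hdist (k + m); push_cast at this; exact this
  have haN : |a| < N := hN
  have ha1 : -(N : ℝ) < a ∧ a < N := abs_lt.mp haN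
  have hNpos : (1 : ℝ) ≤ N := by exact_mod_cast hN0
  rcases lt_abs.mp hk with hk' | hk' <;> rcases lt_abs.mp hm with hm' | hm'
  · -- k > N, m > N
    have hk'' : (N : ℝ) < k := by exact_mod_cast hk'
    have hm'' : (N : ℝ) < m := by exact_mod_cast hm'
    have h2 : (N : ℝ) ≤ |(k : ℝ) + m - a| := by
      have := le_abs_self ((k : ℝ) + m - a); linarith [ha1.2]
    nlinarith [abs_nonneg ((k : ℝ) + m - a)]
  · -- k > N, m < -N
    have hk'' : (N : ℝ) < k := by exact_mod_cast hk'
    have hm'' : (N : ℝ) < -m := by exact_mod_cast hm'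
    have h2 : 2 * (N : ℝ) ≤ |(k : ℝ) - m| := by
      have := le_abs_self ((k : ℝ) - m); linarith
    nlinarith [hdkm, hd0]
  · -- k < -N, m > N
    have hk'' : (N : ℝ) < -k := by exact_mod_cast hk'
    have hm'' : (N : ℝ) < m := by exact_mod_cast hm'
    have h2 : 2 * (N : ℝ) ≤ |(k : ℝ) - m| := by
      have := neg_abs_le ((k : ℝ) - m); linarith
    nlinarith [hdkm, hd0]
  · -- k < -N, m < -N
    have hk'' : (N : ℝ) < -k := by exact_mod_cast hk'
    have hm'' : (N : ℝ) < -m := by exact_mod_cast hm'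
    have h2 : (N : ℝ) ≤ |(k : ℝ) + m - a| := by
      have := neg_abs_le ((k : ℝ) + m - a); linarith [ha1.1]
    nlinarith [abs_nonneg ((k : ℝ) + m - a)]
end

section
/- For all complex numbers x, y and real numbers a, b: |x·e^{ia} + y·e^{-ia}|² + |x·e^{ib} + y·e^{-ib}|² ≥ (|x|² + |y|²)·sin²(a - b). -/
/-! The map `(x, y) ↦ (u, v) = (wave x y a, wave x y b)` has determinant `2i·sin(a - b)`, so by
Cramer's rule `2i·sin(a - b)·x` and `2i·sin(a - b)·y` are differences of `u` and `v` multiplied by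
unit complex numbers. Hence `2|sin(a - b)|·‖x‖` and `2|sin(a - b)|·‖y‖` are at most `‖u‖ + ‖v‖`,
and squaring with `(p + q)² ≤ 2(p² + q²)` gives the claim. -/

section

open Complex

noncomputable def wave (x y : ℂ) (t : ℝ) : ℂ := x * exp (t * I) + y * exp (-(t * I))

lemma wave_swap (x y : ℂ) (t : ℝ) : wave x y t = wave y x (-t) := by
  simp only [wave, ofReal_neg, neg_mul, neg_neg]
  ring

lemma norm_exp_neg_ofReal_mul_I (t : ℝ) : ‖exp (-(t * I))‖ = 1 := by
  rw [← neg_mul, ← ofReal_neg, norm_exp_ofReal_mul_I]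

lemma two_mul_I_mul_sin_sub_mul (x y : ℂ) (a b : ℝ) :
    2 * I * sin (a - b) * x = wave x y a * exp (-(b * I)) - wave x y b * exp (-(a * I)) := by
  have h2sin : 2 * I * sin (a - b) =
      exp (a * I) * exp (-(b * I)) - exp (b * I) * exp (-(a * I)) := by
    rw [← exp_add, ← exp_add, mul_assoc, mul_left_comm, two_sin]
    ring_nf
    rw [I_sq]
    ring_nf
  rw [h2sin, wave, wave]
  ring

lemma two_mul_abs_sin_sub_mul_norm_le (x y : ℂ) (a b : ℝ) :
    2 * |Real.sin (a - b)| * ‖x‖ ≤ ‖wave x y a‖ + ‖wave x y b‖ := by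
  have h := congrArg norm (two_mul_I_mul_sin_sub_mul x y a b)
  rw [← ofReal_sub, ← ofReal_sin] at h
  simp only [norm_mul, norm_I, Complex.norm_two, norm_real, Real.norm_eq_abs, mul_one] at h
  calc 2 * |Real.sin (a - b)| * ‖x‖ = _ := h
    _ ≤ _ := norm_sub_le _ _
    _ = _ := by simp only [norm_mul, norm_exp_neg_ofReal_mul_I, mul_one]

end

lemma two_mul_sq_mul_sq_le_of_two_mul_abs_mul_le_add {s n p q : ℝ} (hn : 0 ≤ n)
    (h : 2 * |s| * n ≤ p + q) : 2 * (n ^ 2 * s ^ 2) ≤ p ^ 2 + q ^ 2 := by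
  have hsq : (2 * |s| * n) ^ 2 ≤ 2 * (p ^ 2 + q ^ 2) :=
    (pow_le_pow_left₀ (by positivity) h 2).trans add_sq_le
  rw [mul_pow, mul_pow, sq_abs] at hsq
  linarith

open Complex in
theorem stmt_5 (x y : ℂ) (a b : ℝ) :
    ‖x * exp (a * I) + y * exp (-(a * I))‖^2 + ‖x * exp (b * I) + y * exp (-(b * I))‖^2 ≥
      (‖x‖^2 + ‖y‖^2) * Real.sin (a - b) ^ 2 := by
  change ‖wave x y a‖ ^ 2 + ‖wave x y b‖ ^ 2 ≥ _
  have hx := two_mul_abs_sin_sub_mul_norm_le x y a b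
  have hy := two_mul_abs_sin_sub_mul_norm_le y x (-a) (-b)
  rw [← wave_swap, ← wave_swap, neg_sub_neg, ← neg_sub, Real.sin_neg, abs_neg] at hy
  linarith [two_mul_sq_mul_sq_le_of_two_mul_abs_mul_le_add (norm_nonneg x) hx,
    two_mul_sq_mul_sq_le_of_two_mul_abs_mul_le_add (norm_nonneg y) hy]
end

section
/- For any real number a, the set A_a of nonzero integer points on the circle x² - ax + y² + ay = 0 has cardinality at most √2·π·|a|. -/
set_option maxHeartbeats 1000000

theorem stmt_9 (a : ℝ)
    (A : Set (ℤ × ℤ))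
    (hA : A = {p : ℤ × ℤ | ((p.1 : ℝ)^2 - a * p.1 + (p.2 : ℝ)^2 + a * p.2 = 0) ∧ p ≠ (0, 0)}) :
    A.Finite ∧ (A.ncard : ℝ) ≤ Real.sqrt 2 * Real.pi * |a| := by
  have hs2 : (Real.sqrt 2)^2 = 2 := Real.sq_sqrt (by norm_num)
  have hs2nn : (0:ℝ) ≤ Real.sqrt 2 := Real.sqrt_nonneg 2
  have hs2pos : (0:ℝ) < Real.sqrt 2 := by nlinarith
  have hpi : Real.pi > 3.14 := by have := Real.pi_gt_d6; linarith
  have hanneg : (0:ℝ) ≤ |a| := abs_nonneg a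
  rcases lt_or_ge (|a|) 1 with hsmall | hbig
  · -- A is empty
    have ha' : -1 < a ∧ a < 1 := abs_lt.mp hsmall
    have hAe : A = ∅ := by
      rw [hA]
      ext ⟨x, y⟩
      simp only [Set.mem_setOf_eq, Set.mem_empty_iff_false, iff_false, not_and]
      intro heq hne
      have hSpos : 1 ≤ x^2 + y^2 := by
        rcases eq_or_ne x 0 with rfl | hx
        · have hy : y ≠ 0 := by simpa using hne
          have : 1 ≤ |y| := Int.one_le_abs hy
          nlinarith [sq_abs y]
        · have : 1 ≤ |x| := Int.one_le_abs hx
          nlinarith [sq_abs x, sq_nonneg y]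
      have hS : ((x:ℝ)^2 + (y:ℝ)^2) = a * ((x:ℝ) - (y:ℝ)) := by ring_nf; ring_nf at heq; linarith
      have hSr : (1:ℝ) ≤ (x:ℝ)^2 + (y:ℝ)^2 := by exact_mod_cast hSpos
      have hC : ((x:ℝ) - (y:ℝ))^2 ≤ 2 * ((x:ℝ)^2 + (y:ℝ)^2) := by nlinarith [sq_nonneg ((x:ℝ) + (y:ℝ))]
      have ha2 : a^2 < 1 := by nlinarith [sq_abs a]
      have hSlt : (x:ℝ)^2 + (y:ℝ)^2 < 2 := by nlinarith [sq_nonneg ((x:ℝ) - (y:ℝ))]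
      have hSint : x^2 + y^2 < 2 := by exact_mod_cast hSlt
      have hx1 : x^2 ≤ 1 := by nlinarith [sq_nonneg y]
      have hy1 : y^2 ≤ 1 := by nlinarith [sq_nonneg x]
      have hxb : -1 ≤ x ∧ x ≤ 1 := by constructor <;> nlinarith
      have hyb : -1 ≤ y ∧ y ≤ 1 := by constructor <;> nlinarith
      obtain ⟨hxl, hxu⟩ := hxb
      obtain ⟨hyl, hyu⟩ := hyb
      interval_cases x <;> interval_cases y <;> push_cast at hS <;>
        first
          | exact hne rfl
          | linarith [ha'.1, ha'.2]
          | norm_num at hS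
    refine ⟨by simp [hAe], ?_⟩
    rw [hAe]
    simp only [Set.ncard_empty, Nat.cast_zero]
    positivity
  · -- main case
    set r : ℝ := |a| / Real.sqrt 2 with hr
    have hr2 : r^2 = a^2/2 := by rw [hr, div_pow, hs2, sq_abs]
    have hrnn : 0 ≤ r := by positivity
    have h2r : 2 * r = Real.sqrt 2 * |a| := by
      rw [hr]; field_simp; nlinarith
    set m : ℤ := ⌈a/2 - r⌉ with hm
    set M : ℤ := ⌊a/2 + r⌋ with hM
    -- any subset of A on which fst is injective has card ≤ card of Icc m M
    have key : ∀ s : Set (ℤ × ℤ), s ⊆ A → Set.InjOn Prod.fst s →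
        s.Finite ∧ s.ncard ≤ (Finset.Icc m M).card := by
      intro s hsA hinj
      have hmap : ∀ p ∈ s, Prod.fst p ∈ ((Finset.Icc m M : Finset ℤ) : Set ℤ) := by
        rintro ⟨x, y⟩ hp
        have hp' := hsA hp
        rw [hA] at hp'
        obtain ⟨heq, -⟩ := hp'
        simp only at heq
        have h1 : ((x:ℝ) - a/2)^2 ≤ r^2 := by rw [hr2]; nlinarith [sq_nonneg ((y:ℝ) + a/2)]
        have hx1 : (x:ℝ) ≤ a/2 + r := by nlinarith [sq_nonneg ((x:ℝ) - a/2 - r), sq_nonneg ((x:ℝ) - a/2 + r)]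
        have hx2 : a/2 - r ≤ (x:ℝ) := by nlinarith [sq_nonneg ((x:ℝ) - a/2 - r), sq_nonneg ((x:ℝ) - a/2 + r)]
        simp only [Finset.coe_Icc, Set.mem_Icc]
        exact ⟨Int.ceil_le.mpr hx2, Int.le_floor.mpr hx1⟩
      have hfin : s.Finite :=
        Set.Finite.of_finite_image
          (((Finset.Icc m M).finite_toSet).subset (Set.image_subset_iff.mpr hmap)) hinj
      refine ⟨hfin, ?_⟩
      have h := Set.ncard_le_ncard_of_injOn Prod.fst hmap hinj ((Finset.Icc m M).finite_toSet)
      rwa [Set.ncard_coe_finset] at h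
    set P1 : Set (ℤ × ℤ) := {p ∈ A | 0 ≤ 2*(p.2:ℝ) + a} with hP1
    set P2 : Set (ℤ × ℤ) := {p ∈ A | ¬ (0 ≤ 2*(p.2:ℝ) + a)} with hP2
    have hunion : A = P1 ∪ P2 := by
      ext p; simp only [hP1, hP2, Set.mem_union, Set.mem_setOf_eq]; tauto
    have hinjgen : ∀ p ∈ A, ∀ q ∈ A, p.1 = q.1 →
        (2*(p.2:ℝ) + a)^2 = (2*(q.2:ℝ) + a)^2 := by
      rintro ⟨x, y⟩ hp ⟨x', y'⟩ hq hxe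
      simp only at hxe
      subst hxe
      rw [hA] at hp hq
      obtain ⟨hp1, -⟩ := hp
      obtain ⟨hq1, -⟩ := hq
      simp only at hp1 hq1
      linear_combination 4*hp1 - 4*hq1
    have hinj1 : Set.InjOn Prod.fst P1 := by
      rintro ⟨x, y⟩ hp ⟨x', y'⟩ hq hxe
      simp only at hxe
      obtain ⟨hpA, hps⟩ := hp
      obtain ⟨hqA, hqs⟩ := hq
      have hsq := hinjgen _ hpA _ hqA hxe
      simp only at hsq hps hqs
      have hyy : (y:ℝ) = (y':ℝ) := by
        have h1 : (y:ℝ) ≤ y' := by nlinarith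
        have h2 : (y':ℝ) ≤ y := by nlinarith
        linarith
      have : y = y' := by exact_mod_cast hyy
      simp [hxe, this, Prod.ext_iff]
    have hinj2 : Set.InjOn Prod.fst P2 := by
      rintro ⟨x, y⟩ hp ⟨x', y'⟩ hq hxe
      simp only at hxe
      obtain ⟨hpA, hps⟩ := hp
      obtain ⟨hqA, hqs⟩ := hq
      have hsq := hinjgen _ hpA _ hqA hxe
      simp only at hsq hps hqs
      push_neg at hps hqs
      have hyy : (y:ℝ) = (y':ℝ) := by
        have h1 : (y:ℝ) ≤ y' := by nlinarith
        have h2 : (y':ℝ) ≤ y := by nlinarith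
        linarith
      have : y = y' := by exact_mod_cast hyy
      simp [hxe, this, Prod.ext_iff]
    have hsub1 : P1 ⊆ A := fun p hp => hp.1
    have hsub2 : P2 ⊆ A := fun p hp => hp.1
    obtain ⟨hfin1, hcard1⟩ := key P1 hsub1 hinj1
    obtain ⟨hfin2, hcard2⟩ := key P2 hsub2 hinj2
    have hfin : A.Finite := by rw [hunion]; exact hfin1.union hfin2
    refine ⟨hfin, ?_⟩
    have hcard : A.ncard ≤ 2 * (Finset.Icc m M).card := by
      calc A.ncard = (P1 ∪ P2).ncard := by rw [← hunion]
        _ ≤ P1.ncard + P2.ncard := Set.ncard_union_le P1 P2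
        _ ≤ 2 * (Finset.Icc m M).card := by omega
    have hTcard : (Finset.Icc m M).card = (M + 1 - m).toNat := Int.card_Icc m M
    have hMr : (M:ℝ) ≤ a/2 + r := Int.floor_le _
    have hmr : a/2 - r ≤ (m:ℝ) := Int.le_ceil _
    have hflo : M + 1 - m ≤ ⌊Real.sqrt 2 * |a|⌋ + 1 := by
      have h0 : (M - m : ℝ) ≤ Real.sqrt 2 * |a| := by push_cast; linarith
      have h2 : M - m ≤ ⌊Real.sqrt 2 * |a|⌋ := Int.le_floor.mpr (by exact_mod_cast h0)
      omega
    have hfl_nonneg : 0 ≤ ⌊Real.sqrt 2 * |a|⌋ + 1 := by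
      have h0 : (0:ℝ) ≤ Real.sqrt 2 * |a| := by positivity
      have : (0:ℤ) ≤ ⌊Real.sqrt 2 * |a|⌋ := Int.le_floor.mpr (by exact_mod_cast h0)
      omega
    have hcardR : (A.ncard : ℝ) ≤ 2 * ((⌊Real.sqrt 2 * |a|⌋ : ℝ) + 1) := by
      have h1 : (M + 1 - m).toNat ≤ (⌊Real.sqrt 2 * |a|⌋ + 1).toNat := Int.toNat_le_toNat hflo
      have h2 : ((⌊Real.sqrt 2 * |a|⌋ + 1).toNat : ℤ) = ⌊Real.sqrt 2 * |a|⌋ + 1 :=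
        Int.toNat_of_nonneg hfl_nonneg
      have h3 : (A.ncard : ℝ) ≤ 2 * ((M + 1 - m).toNat : ℝ) := by
        rw [hTcard] at hcard
        exact_mod_cast hcard
      have h4 : ((M + 1 - m).toNat : ℝ) ≤ (⌊Real.sqrt 2 * |a|⌋ : ℝ) + 1 := by
        have h5 : (((M + 1 - m).toNat : ℤ) : ℝ) ≤ (((⌊Real.sqrt 2 * |a|⌋ + 1).toNat : ℤ) : ℝ) := by
          exact_mod_cast h1
        rw [h2] at h5
        push_cast at h5 ⊢
        linarith
      linarith
    rcases lt_or_ge (Real.sqrt 2 * |a|) 2 with hc | hc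
    · have hfl1 : (⌊Real.sqrt 2 * |a|⌋ : ℝ) ≤ 1 := by
        have h1 : (⌊Real.sqrt 2 * |a|⌋ : ℝ) ≤ Real.sqrt 2 * |a| := Int.floor_le _
        have h2 : ⌊Real.sqrt 2 * |a|⌋ < 2 := by exact_mod_cast h1.trans_lt hc
        exact_mod_cast (by omega : ⌊Real.sqrt 2 * |a|⌋ ≤ 1)
      have hs14 : (1.41:ℝ) ≤ Real.sqrt 2 := by nlinarith
      have hsp : (4.4:ℝ) ≤ Real.sqrt 2 * Real.pi := by nlinarith
      have h4 : (4:ℝ) ≤ Real.sqrt 2 * Real.pi * |a| := by nlinarith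
      linarith
    · have hfl : (⌊Real.sqrt 2 * |a|⌋ : ℝ) ≤ Real.sqrt 2 * |a| := Int.floor_le _
      have : 2 * (Real.sqrt 2 * |a|) + 2 ≤ Real.sqrt 2 * Real.pi * |a| := by nlinarith
      linarith
end
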